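/- Let G be a finite digraph regular of in-degree h and set the threshold t = h. Then G synchronizes from an initial active set S if and only if the induced subdigraph on V(G) \ S contains no directed cycle. -/

import Mathlib

open Finset

open Classical in
noncomputable def actStep {V : Type*} [Fintype V] (E : V → V → Prop) (t : ℕ)
    (S : Finset V) : Finset V :=
  S ∪ Finset.univ.filter (fun v => t ≤ (S.filter (fun u => E u v)).card)

noncomputable def activeSets {V : Type*} [Fintype V] (E : V → V → Prop) (t : ℕ)
    (S : Finset V) (i : ℕ) : Finset V :=
  (actStep E t)^[i] S

-- The least number of steps needed to activate all vertices (`⊤` if never).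
open Classical in
noncomputable def syncTime {V : Type*} [Fintype V] (E : V → V → Prop) (t : ℕ)
    (S : Finset V) : ℕ∞ :=
  if h : ∃ i, activeSets E t S i = Finset.univ then (Nat.find h : ℕ∞) else ⊤

/-- The higher diameter `d_{st}`: the max of `syncTime` over all `s`-subsets. -/
noncomputable def higherDiam {V : Type*} [Fintype V] (E : V → V → Prop) (t s : ℕ) : ℕ∞ :=
  ⨆ S : {S : Finset V // S.card = s}, syncTime E t S.1

def cycleIn {V : Type*} (E : V → V → Prop) (T : Set V) (m : ℕ) : Prop :=
  0 < m ∧ ∃ c : ZMod m → V, Function.Injective c ∧ (∀ i, c i ∈ T) ∧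
    ∀ i, E (c i) (c (i + 1))

def hasCycle {V : Type*} (E : V → V → Prop) (m : ℕ) : Prop :=
  0 < m ∧ ∃ c : ZMod m → V, Function.Injective c ∧ ∀ i, E (c i) (c (i + 1))

/-! When the threshold is at least the in-degree, a vertex cannot activate while one of its
in-neighbours is inactive, so a set missing `S` in which every vertex has an in-neighbour inside
the set (for instance a cycle) never activates. Conversely the process stabilises, and when the
threshold is at most the in-degree every vertex still inactive has an inactive in-neighbour;
walking backwards along in-neighbours inside the finite inactive set must eventually close up
into a directed cycle. -/

namespace Function

variable {α : Type*}

theorem exists_iterate_mem_periodicPts [Finite α] (f : α → α) (x : α) :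
    ∃ k, f^[k] x ∈ periodicPts f := by
  obtain ⟨m, n, heq, hne⟩ : ∃ m n, f^[m] x = f^[n] x ∧ m ≠ n := by
    simpa [Injective] using not_injective_infinite_finite (f^[·] x)
  wlog hlt : m < n generalizing m n
  · exact this n m heq.symm hne.symm (by omega)
  refine ⟨m, mk_mem_periodicPts (Nat.sub_pos_of_lt hlt) ?_⟩
  rw [IsPeriodicPt, IsFixedPt, ← iterate_add_apply, Nat.sub_add_cancel hlt.le, heq]

variable {f : α → α} {x : α}

theorem injective_iterate_zmodVal [NeZero (minimalPeriod f x)] :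
    Injective fun k : ZMod (minimalPeriod f x) => f^[k.val] x := fun k l hkl =>
  ZMod.val_injective _ (iterate_injOn_Iio_minimalPeriod (ZMod.val_lt k) (ZMod.val_lt l) hkl)

theorem iterate_zmodVal_add_one [NeZero (minimalPeriod f x)] (k : ZMod (minimalPeriod f x)) :
    f^[(k + 1).val] x = f (f^[k.val] x) := by
  have hcast : ((k.val + 1 : ℕ) : ZMod (minimalPeriod f x)) = k + 1 := by simp
  rw [← hcast, ZMod.val_natCast, iterate_mod_minimalPeriod_eq, iterate_succ_apply']

end Function

open Function

section Cycles

variable {V : Type*} {E : V → V → Prop} {T : Set V} {m : ℕ}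

theorem cycleIn.mono {T' : Set V} (hTT' : T ⊆ T') (hc : cycleIn E T m) : cycleIn E T' m := by
  obtain ⟨hm, c, hinj, hcT, hE⟩ := hc
  exact ⟨hm, c, hinj, fun i => hTT' (hcT i), hE⟩

theorem cycleIn.exists_forall_exists_pred (hc : cycleIn E T m) :
    ∃ R ⊆ T, R.Nonempty ∧ ∀ v ∈ R, ∃ u ∈ R, E u v := by
  obtain ⟨hm, c, -, hcT, hE⟩ := hc
  have : NeZero m := ⟨hm.ne'⟩
  refine ⟨Set.range c, Set.range_subset_iff.2 hcT, Set.range_nonempty c, ?_⟩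
  rintro _ ⟨i, rfl⟩
  exact ⟨c (i - 1), Set.mem_range_self _, by simpa using hE (i - 1)⟩

/-- The cycle is the orbit of a periodic point of a choice of in-neighbour, traversed backwards. -/
theorem exists_cycleIn_of_forall_exists_pred [Finite V] (hne : T.Nonempty)
    (hpred : ∀ v ∈ T, ∃ u ∈ T, E u v) : ∃ m, cycleIn E T m := by
  choose! f hfT hfE using hpred
  obtain ⟨x₀, hx₀⟩ := hne
  obtain ⟨k, hk⟩ := exists_iterate_mem_periodicPts f x₀
  set x := f^[k] x₀
  have horbit : ∀ n, f^[n] x ∈ T := fun n =>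
    Set.MapsTo.iterate hfT n (Set.MapsTo.iterate hfT k hx₀)
  have hper := minimalPeriod_pos_of_mem_periodicPts hk
  have : NeZero (minimalPeriod f x) := ⟨hper.ne'⟩
  refine ⟨minimalPeriod f x, hper, fun i => f^[(-i).val] x,
    injective_iterate_zmodVal.comp neg_injective, fun i => horbit _, fun i => ?_⟩
  have hedge := hfE _ (horbit (-(i + 1)).val)
  rwa [← iterate_zmodVal_add_one (f := f) (x := x), show -(i + 1) + 1 = -i by ring] at hedge

end Cycles

section Activation

open Classical

variable {V : Type*} [Fintype V] {E : V → V → Prop} {t : ℕ} {S : Finset V}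

theorem activeSets_succ (i : ℕ) : activeSets E t S (i + 1) = actStep E t (activeSets E t S i) :=
  iterate_succ_apply' _ _ _

theorem mem_actStep {A : Finset V} {v : V} :
    v ∈ actStep E t A ↔ v ∈ A ∨ t ≤ (A.filter (fun u => E u v)).card := by
  simp [actStep]

theorem subset_actStep (A : Finset V) : A ⊆ actStep E t A :=
  fun _ hv => mem_actStep.2 (Or.inl hv)

theorem activeSets_mono : Monotone (activeSets E t S) :=
  monotone_nat_of_le_succ fun i =>
    (activeSets_succ (E := E) (t := t) (S := S) i).symm ▸ subset_actStep _

theorem subset_activeSets (i : ℕ) : S ⊆ activeSets E t S i :=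
  activeSets_mono (Nat.zero_le i)

theorem exists_actStep_activeSets_eq :
    ∃ j, actStep E t (activeSets E t S j) = activeSets E t S j := by
  obtain ⟨j, hj⟩ :=
    WellFoundedGT.monotone_chain_condition ⟨activeSets E t S, activeSets_mono⟩
  exact ⟨j, (activeSets_succ j).symm.trans (hj (j + 1) j.le_succ).symm⟩

theorem notMem_activeSets_of_forall_exists_pred
    (hdeg : ∀ v, (Finset.univ.filter (fun u => E u v)).card ≤ t) {T : Set V}
    (hpred : ∀ v ∈ T, ∃ u ∈ T, E u v) (hST : ∀ v ∈ T, v ∉ S) (i : ℕ) :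
    ∀ v ∈ T, v ∉ activeSets E t S i := by
  induction i with
  | zero => exact hST
  | succ i ih =>
    intro v hv hact
    rw [activeSets_succ, mem_actStep] at hact
    refine hact.elim (ih v hv) fun hle => ?_
    obtain ⟨u, huT, huv⟩ := hpred v hv
    have hsub :
        (activeSets E t S i).filter (fun w => E w v) ⊂ Finset.univ.filter (fun w => E w v) :=
      (Finset.ssubset_iff_of_subset (Finset.filter_subset_filter _ (Finset.subset_univ _))).2
        ⟨u, by simpa using huv, fun hu => ih u huT (Finset.mem_filter.1 hu).1⟩
    exact (hle.trans_lt ((Finset.card_lt_card hsub).trans_le (hdeg v))).false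

theorem exists_pred_notMem_of_actStep_eq
    (hdeg : ∀ v, t ≤ (Finset.univ.filter (fun u => E u v)).card) {A : Finset V}
    (hA : actStep E t A = A) {v : V} (hv : v ∉ A) : ∃ u ∉ A, E u v := by
  by_contra! hall
  refine hv (hA ▸ mem_actStep.2 (Or.inr ((hdeg v).trans (Finset.card_le_card fun u hu => ?_))))
  have huv := (Finset.mem_filter.1 hu).2
  exact Finset.mem_filter.2 ⟨by_contra fun huA => hall u huA huv, huv⟩

end Activation

open Classical in
theorem stmt_5 {V : Type*} [Fintype V] (E : V → V → Prop) (h : ℕ)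
    (hreg : ∀ v : V, (Finset.univ.filter (fun u => E u v)).card = h) (S : Finset V) :
    (∃ i, activeSets E h S i = Finset.univ) ↔ ¬ ∃ m, cycleIn E {v | v ∉ S} m := by
  constructor
  · rintro ⟨i, hi⟩ ⟨m, hcycle⟩
    obtain ⟨R, hRS, ⟨v, hv⟩, hR⟩ := hcycle.exists_forall_exists_pred
    exact notMem_activeSets_of_forall_exists_pred (fun v => (hreg v).le) hR hRS i v hv
      (hi ▸ Finset.mem_univ v)
  · contrapose!
    intro hnever
    obtain ⟨j, hj⟩ := exists_actStep_activeSets_eq (E := E) (t := h) (S := S)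
    obtain ⟨v, hv⟩ : ∃ v, v ∉ activeSets E h S j := by
      simpa [Finset.eq_univ_iff_forall] using hnever j
    obtain ⟨m, hm⟩ := exists_cycleIn_of_forall_exists_pred ⟨v, hv⟩
      fun w hw => exists_pred_notMem_of_actStep_eq (fun u => (hreg u).ge) hj hw
    exact ⟨m, hm.mono fun w (hw : w ∉ activeSets E h S j) hwS => hw (subset_activeSets j hwS)⟩
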